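/- Let D be a finite set of documents, E a finite set of entities, and A : D → Set E an ACL function. Define ExpandDocSet(Ẽ) = { d ∈ D : Ẽ ⊆ A(d) } and ExpandEntitySet(D̃) = ⋂_{d ∈ D̃} A(d). Suppose (D̃*, Ẽ*) is a maximum biclique (a biclique maximizing the number |D̃| × |Ẽ| of edges) and there exists a document d₀ ∈ D with A(d₀) = Ẽ*. Then among the candidate bicliques (ExpandDocSet(𝒜), ExpandEntitySet(ExpandDocSet(𝒜))) generated from the unique ACLs 𝒜 ∈ { A(d) : d ∈ D } as seeds, the candidate maximizing the product of the sizes of its two vertex sets is a maximum biclique, i.e., its edge count |D̃| × |Ẽ| equals |D̃*| × |Ẽ*|. -/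
import Mathlib


/-- Adjacency in the bipartite authorization graph. -/
def Adj {D E : Type*} (A : D → Set E) (d : D) (e : E) : Prop :=
  e ∈ A d

/-- `(D̃, Ẽ)` is a biclique of the bipartite authorization graph. -/
def IsBiclique {D E : Type*} (A : D → Set E) (Dt : Set D) (Et : Set E) : Prop :=
  ∀ d ∈ Dt, ∀ e ∈ Et, Adj A d e

/-- `ExpandDocSet(Ẽ)`: the documents accessible to all entities of `Ẽ`. -/
def ExpandDocSet {D E : Type*} (A : D → Set E) (Et : Set E) : Set D :=
  {d | Et ⊆ A d}

/-- `ExpandEntitySet(D̃)`: the entities authorized to access every document of `D̃`. -/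
def ExpandEntitySet {D E : Type*} (A : D → Set E) (Dt : Set D) : Set E :=
  ⋂ d ∈ Dt, A d

/-- The edge count of the candidate biclique produced by the heuristic from the
seed ACL `A d`: the product of the sizes of its two vertex sets. -/
noncomputable def candidateEdges {D E : Type*} (A : D → Set E) (d : D) : ℕ :=
  (ExpandDocSet A (A d)).ncard * (ExpandEntitySet A (ExpandDocSet A (A d))).ncard

/-- Suppose `(D̃*, Ẽ*)` is a maximum biclique (maximizing the edge count
`|D̃| × |Ẽ|` over all bicliques) and some document `d₀` has ACL exactly `Ẽ*`.
Then the heuristic candidate generated from the unique ACLs as seeds that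
maximizes the product of the sizes of its two vertex sets has edge count equal
to `|D̃*| × |Ẽ*|`, i.e., it is a maximum biclique. -/
theorem heuristic_finds_maximum_biclique {D E : Type*} [Fintype D] [Fintype E]
    (A : D → Set E) (DtStar : Set D) (EtStar : Set E)
    (hbic : IsBiclique A DtStar EtStar)
    (hmax : ∀ (Dt : Set D) (Et : Set E), IsBiclique A Dt Et →
      Dt.ncard * Et.ncard ≤ DtStar.ncard * EtStar.ncard)
    (hseed : ∃ d₀ : D, A d₀ = EtStar) :
    ∀ d₁ : D, (∀ d : D, candidateEdges A d ≤ candidateEdges A d₁) →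
      candidateEdges A d₁ = DtStar.ncard * EtStar.ncard := by
  intro d₁ hd₁
  obtain ⟨d₀, hd₀⟩ := hseed
  have hcand_bic : ∀ d : D, IsBiclique A (ExpandDocSet A (A d))
      (ExpandEntitySet A (ExpandDocSet A (A d))) := by
    intro d x hx e he
    exact Set.mem_iInter₂.mp he x hx
  have hub : candidateEdges A d₁ ≤ DtStar.ncard * EtStar.ncard :=
    hmax _ _ (hcand_bic d₁)
  have hlb : DtStar.ncard * EtStar.ncard ≤ candidateEdges A d₀ := by
    have h1 : DtStar ⊆ ExpandDocSet A (A d₀) := by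
      intro d hd e he
      rw [hd₀] at he
      exact hbic d hd e he
    have h2 : EtStar ⊆ ExpandEntitySet A (ExpandDocSet A (A d₀)) := by
      intro e he
      refine Set.mem_biInter ?_
      intro d hd
      exact hd (hd₀ ▸ he)
    exact Nat.mul_le_mul (Set.ncard_le_ncard h1 (Set.toFinite _))
      (Set.ncard_le_ncard h2 (Set.toFinite _))
  exact le_antisymm hub (le_trans (le_trans hlb (hd₁ d₀)) le_rfl)
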